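/- The set V = ∪_{i≥0} V_i (with V_0 = −S(L), V_{i+1} = ∪_{v∈V_i} π(Ψ(v))) satisfies the stability property ∪_{v ∈ V} π(Ψ(v)) = V, and has minimal element min V = −μ_κ, the opposite of the largest slope of the Newton polygon of L. -/

import Mathlib

open Polynomial Finset

noncomputable def PL {K : Type*} [Field K] (ℓ n : ℕ) (a : ℕ → Polynomial K) : Finset (ℚ × ℚ) :=
  (Finset.range (n + 1)).biUnion fun i =>
    (a i).support.image fun j : ℕ => ((ℓ : ℚ) ^ i, (j : ℚ))

noncomputable def PsiSet {K : Type*} [Field K] (ℓ n : ℕ) (a : ℕ → Polynomial K) (v : ℚ) :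
    Finset ℚ :=
  (PL ℓ n a).image fun p => v * p.1 + p.2

noncomputable def psi {K : Type*} [Field K] (ℓ n : ℕ) (a : ℕ → Polynomial K) (v : ℚ) : ℚ :=
  WithTop.untopD 0 ((PsiSet ℓ n a v).min)

noncomputable def piF {K : Type*} [Field K] (ℓ n : ℕ) (a : ℕ → Polynomial K) (q : ℚ) : ℚ :=
  WithBot.unbotD 0 (((PL ℓ n a).image fun p => (q - p.2) / p.1).max)

def slopeSet {K : Type*} [Field K] (ℓ n : ℕ) (a : ℕ → Polynomial K) : Set ℚ :=
  {μ | ∃ b : ℚ,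
    (∃ p ∈ PL ℓ n a, ∃ q ∈ PL ℓ n a, p ≠ q ∧ p.2 - μ * p.1 = b ∧ q.2 - μ * q.1 = b) ∧
    ∀ p ∈ PL ℓ n a, b ≤ p.2 - μ * p.1}

noncomputable def scaleEmb (ℓ : ℕ) (hℓ : 2 ≤ ℓ) (i : ℕ) : ℚ ↪o ℚ :=
  (OrderIso.mulLeft₀ ((ℓ : ℚ) ^ i)
    (pow_pos (by exact_mod_cast Nat.lt_of_lt_of_le Nat.zero_lt_two hℓ) i)).toOrderEmbedding

noncomputable def mahlerOp {K : Type*} [Field K] (ℓ : ℕ) (hℓ : 2 ≤ ℓ) (n : ℕ)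
    (a : ℕ → Polynomial K) (f : HahnSeries ℚ K) : HahnSeries ℚ K :=
  ∑ i ∈ Finset.range (n + 1),
    (HahnSeries.ofPowerSeries ℚ K (a i : PowerSeries K)) *
      HahnSeries.embDomain (scaleEmb ℓ hℓ i) f

noncomputable def VSeq {K : Type*} [Field K] (ℓ n : ℕ) (a : ℕ → Polynomial K) : ℕ → Set ℚ
  | 0 => Neg.neg '' slopeSet ℓ n a
  | i + 1 => ⋃ v ∈ VSeq ℓ n a i, ((PsiSet ℓ n a v).image (piF ℓ n a) : Set ℚ)

noncomputable def VSet {K : Type*} [Field K] (ℓ n : ℕ) (a : ℕ → Polynomial K) : Set ℚ :=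
  ⋃ i, VSeq ℓ n a i

/-!
If `q = v ℓ^i + j` for a point `(ℓ^i, j)` of `P(L)`, then `(q - j) / ℓ^i = v`, so `π(q) ≥ v` for
every `q ∈ Ψ(v)`, with equality for `q = ψ(v) = min Ψ(v)`. Hence `π ∘ Ψ` never decreases below
`v` and always returns `v` itself: the union `V` is stable, and every element of `V` is bounded
below by an element of `V_0 = -S(L)`. The slope set `S(L)` is finite, and nonempty because `P(L)`
has points with the distinct abscissae `1` and `ℓ^n`; so it has a largest element `μ_κ`, and
`-μ_κ = min V_0 = min V`.
-/

section

variable {K : Type*} [Field K] {ℓ n : ℕ} {a : ℕ → Polynomial K}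

lemma mem_PL {p : ℚ × ℚ} :
    p ∈ PL ℓ n a ↔ ∃ i ≤ n, ∃ j ∈ (a i).support, ((ℓ : ℚ) ^ i, (j : ℚ)) = p := by
  simp [PL]

lemma exists_mem_PL_fst_eq {i : ℕ} (hi : i ≤ n) (ha : a i ≠ 0) :
    ∃ y : ℚ, ((ℓ : ℚ) ^ i, y) ∈ PL ℓ n a := by
  obtain ⟨j, hj⟩ := Polynomial.support_nonempty.2 ha
  exact ⟨j, mem_PL.2 ⟨i, hi, j, hj, rfl⟩⟩

lemma PL_nonempty (h0 : a 0 ≠ 0) : (PL ℓ n a).Nonempty :=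
  let ⟨_, hy⟩ := exists_mem_PL_fst_eq (Nat.zero_le n) h0
  ⟨_, hy⟩

lemma fst_pos_of_mem_PL (hℓ : 0 < ℓ) {p : ℚ × ℚ} (hp : p ∈ PL ℓ n a) : 0 < p.1 := by
  obtain ⟨i, -, j, -, rfl⟩ := mem_PL.1 hp
  positivity

/-- The right end `R` of the lower hull (rightmost, then lowest) and the point `s` left of `R`
maximising the slope of `[s, R]` span a line lying below every point of `P`. -/
lemma exists_supporting_line {P : Finset (ℚ × ℚ)} {p q : ℚ × ℚ} (hp : p ∈ P) (hq : q ∈ P)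
    (hpq : p.1 < q.1) :
    ∃ μ b : ℚ, (∃ r ∈ P, ∃ s ∈ P, r ≠ s ∧ r.2 - μ * r.1 = b ∧ s.2 - μ * s.1 = b) ∧
      ∀ t ∈ P, b ≤ t.2 - μ * t.1 := by
  obtain ⟨R, hR, hRmax⟩ := P.exists_max_image (fun t : ℚ × ℚ => toLex (t.1, -t.2)) ⟨p, hp⟩
  have hR_right : ∀ t ∈ P, t.1 < R.1 ∨ t.1 = R.1 ∧ R.2 ≤ t.2 := fun t ht =>
    (Prod.Lex.toLex_le_toLex.1 (hRmax t ht)).imp_right fun h => ⟨h.1, neg_le_neg_iff.1 h.2⟩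
  have hpR : p.1 < R.1 := by
    rcases hR_right q hq with h | ⟨h, -⟩ <;> linarith
  set slope := fun t : ℚ × ℚ => (R.2 - t.2) / (R.1 - t.1)
  obtain ⟨s, hs, hsmax⟩ := (P.filter (·.1 < R.1)).exists_max_image slope
    ⟨p, mem_filter.2 ⟨hp, hpR⟩⟩
  obtain ⟨hsP, hsR⟩ := mem_filter.1 hs
  refine ⟨slope s, R.2 - slope s * R.1, ⟨R, hR, s, hsP, fun h => hsR.ne (h ▸ rfl), rfl, ?_⟩, ?_⟩
  · have : slope s * (R.1 - s.1) = R.2 - s.2 := div_mul_cancel₀ _ (sub_pos.2 hsR).ne'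
    linarith
  · intro t ht
    rcases hR_right t ht with htR | ⟨htR, hle⟩
    · have := (div_le_iff₀ (sub_pos.2 htR)).1 (hsmax t (mem_filter.2 ⟨ht, htR⟩))
      linarith
    · rw [htR]
      linarith

lemma slopeSet_nonempty (hℓ : 1 < ℓ) (h0 : a 0 ≠ 0) (hn : a n ≠ 0) (hn_pos : 0 < n) :
    (slopeSet ℓ n a).Nonempty := by
  obtain ⟨y₀, hy₀⟩ := exists_mem_PL_fst_eq (Nat.zero_le n) h0
  obtain ⟨yₙ, hyₙ⟩ := exists_mem_PL_fst_eq le_rfl hn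
  exact exists_supporting_line hy₀ hyₙ (pow_lt_pow_right₀ (by exact_mod_cast hℓ) hn_pos)

lemma slopeSet_finite : (slopeSet ℓ n a).Finite := by
  refine ((PL ℓ n a ×ˢ PL ℓ n a).image
    fun rs : (ℚ × ℚ) × (ℚ × ℚ) => (rs.2.2 - rs.1.2) / (rs.2.1 - rs.1.1)).finite_toSet.subset ?_
  rintro μ ⟨b, ⟨r, hr, s, hs, hrs, hrb, hsb⟩, -⟩
  have hne : r.1 ≠ s.1 := fun h => hrs (Prod.ext h (by rw [h] at hrb; linarith))
  refine mem_image.2 ⟨(r, s), mem_product.2 ⟨hr, hs⟩, ?_⟩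
  rw [div_eq_iff (sub_ne_zero.2 hne.symm)]
  linarith

lemma exists_isGreatest_slopeSet (hℓ : 1 < ℓ) (h0 : a 0 ≠ 0) (hn : a n ≠ 0) (hn_pos : 0 < n) :
    ∃ μ, IsGreatest (slopeSet ℓ n a) μ :=
  let ⟨μ, hμ, hmax⟩ := Set.exists_max_image _ id slopeSet_finite (slopeSet_nonempty hℓ h0 hn hn_pos)
  ⟨μ, hμ, hmax⟩

lemma piF_eq_max' (hP : (PL ℓ n a).Nonempty) (q : ℚ) :
    piF ℓ n a q = ((PL ℓ n a).image fun p => (q - p.2) / p.1).max' (hP.image _) := by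
  rw [piF, ← coe_max', WithBot.unbotD_coe]

lemma div_le_piF {p : ℚ × ℚ} (hp : p ∈ PL ℓ n a) (q : ℚ) : (q - p.2) / p.1 ≤ piF ℓ n a q := by
  rw [piF_eq_max' ⟨p, hp⟩]
  exact le_max' _ _ (mem_image_of_mem (fun p : ℚ × ℚ => (q - p.2) / p.1) hp)

lemma piF_le (hP : (PL ℓ n a).Nonempty) {q v : ℚ} (h : ∀ p ∈ PL ℓ n a, (q - p.2) / p.1 ≤ v) :
    piF ℓ n a q ≤ v := by
  rw [piF_eq_max' hP]
  exact max'_le _ _ _ (forall_mem_image.2 h)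

lemma le_piF_of_mem_PsiSet (hℓ : 0 < ℓ) {v q : ℚ} (hq : q ∈ PsiSet ℓ n a v) :
    v ≤ piF ℓ n a q := by
  obtain ⟨p, hp, rfl⟩ := mem_image.1 hq
  have hp₁ := fst_pos_of_mem_PL hℓ hp
  calc v = (v * p.1 + p.2 - p.2) / p.1 := by field_simp; ring
    _ ≤ _ := div_le_piF hp _

lemma PsiSet_nonempty (hP : (PL ℓ n a).Nonempty) (v : ℚ) : (PsiSet ℓ n a v).Nonempty :=
  hP.image _

lemma psi_eq_min' (hP : (PL ℓ n a).Nonempty) (v : ℚ) :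
    psi ℓ n a v = (PsiSet ℓ n a v).min' (PsiSet_nonempty hP v) := by
  rw [psi, ← coe_min' (PsiSet_nonempty hP v), WithTop.untopD_coe]

lemma psi_mem_PsiSet (hP : (PL ℓ n a).Nonempty) (v : ℚ) : psi ℓ n a v ∈ PsiSet ℓ n a v :=
  psi_eq_min' hP v ▸ min'_mem _ _

lemma psi_le {p : ℚ × ℚ} (hp : p ∈ PL ℓ n a) (v : ℚ) : psi ℓ n a v ≤ v * p.1 + p.2 := by
  rw [psi_eq_min' ⟨p, hp⟩]
  exact min'_le _ _ (mem_image_of_mem _ hp)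

lemma piF_psi (hℓ : 0 < ℓ) (hP : (PL ℓ n a).Nonempty) (v : ℚ) : piF ℓ n a (psi ℓ n a v) = v :=
  le_antisymm
    (piF_le hP fun p hp => by
      rw [div_le_iff₀ (fst_pos_of_mem_PL hℓ hp)]
      linarith [psi_le hp v])
    (le_piF_of_mem_PsiSet hℓ (psi_mem_PsiSet hP v))

lemma mem_image_piF_PsiSet (hℓ : 0 < ℓ) (hP : (PL ℓ n a).Nonempty) (v : ℚ) :
    v ∈ (PsiSet ℓ n a v).image (piF ℓ n a) :=
  mem_image.2 ⟨_, psi_mem_PsiSet hP v, piF_psi hℓ hP v⟩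

lemma biUnion_image_piF_VSet (hℓ : 0 < ℓ) (hP : (PL ℓ n a).Nonempty) :
    (⋃ v ∈ VSet ℓ n a, ((PsiSet ℓ n a v).image (piF ℓ n a) : Set ℚ)) = VSet ℓ n a := by
  refine Set.Subset.antisymm (Set.iUnion₂_subset fun v hv q hq => ?_) fun v hv => ?_
  · obtain ⟨i, hvi⟩ := Set.mem_iUnion.1 hv
    exact Set.mem_iUnion.2 ⟨i + 1, Set.mem_biUnion hvi hq⟩
  · exact Set.mem_biUnion hv (mem_coe.2 (mem_image_piF_PsiSet hℓ hP v))

lemma mem_lowerBounds_VSeq (hℓ : 0 < ℓ) {c : ℚ} (hc : c ∈ lowerBounds (VSeq ℓ n a 0)) :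
    ∀ i, c ∈ lowerBounds (VSeq ℓ n a i)
  | 0 => hc
  | i + 1 => fun _ hv => by
    obtain ⟨w, hw, hv⟩ := Set.mem_iUnion₂.1 hv
    obtain ⟨q, hq, rfl⟩ := mem_image.1 (mem_coe.1 hv)
    exact (mem_lowerBounds_VSeq hℓ hc i hw).trans (le_piF_of_mem_PsiSet hℓ hq)

lemma isLeast_VSet (hℓ : 0 < ℓ) {μ : ℚ} (hμ : IsGreatest (slopeSet ℓ n a) μ) :
    IsLeast (VSet ℓ n a) (-μ) := by
  refine ⟨Set.mem_iUnion.2 ⟨0, μ, hμ.1, rfl⟩, fun v hv => ?_⟩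
  obtain ⟨i, hvi⟩ := Set.mem_iUnion.1 hv
  refine mem_lowerBounds_VSeq hℓ ?_ i hvi
  rintro _ ⟨ν, hν, rfl⟩
  exact neg_le_neg (hμ.2 hν)

end

theorem stmt12 {K : Type*} [Field K] (ℓ n : ℕ) (hℓ : 2 ≤ ℓ) (a : ℕ → Polynomial K)
    (h0 : a 0 ≠ 0) (hn : a n ≠ 0) (hn1 : 1 ≤ n) :
    (⋃ v ∈ VSet ℓ n a, ((PsiSet ℓ n a v).image (piF ℓ n a) : Set ℚ)) = VSet ℓ n a ∧
    ∃ μ : ℚ, IsGreatest (slopeSet ℓ n a) μ ∧ IsLeast (VSet ℓ n a) (-μ) := by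
  have hℓ0 : 0 < ℓ := by omega
  obtain ⟨μ, hμ⟩ := exists_isGreatest_slopeSet (by omega : 1 < ℓ) h0 hn hn1
  exact ⟨biUnion_image_piF_VSet hℓ0 (PL_nonempty h0), μ, hμ, isLeast_VSet hℓ0 hμ⟩
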